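/- arXiv:2603.20272 — 5 statements merged into one kernel-verified Lean document; each statement's English description precedes it below -/
import Mathlib

section
/- Let V be a finite-dimensional ℚ-vector space carrying a mixed ℚ-Hodge structure (W_•, F^•). Then there exists exactly one bigraduation (I^{p,q}) of (V, W_•, F^•) satisfying the conjugation condition (Deligne's canonical bigraduation). -/
/-!
Everything takes place in the lattice of `ℂ`-subspaces of `V_ℂ`, which is complete and modular,
and on which complex conjugation acts as an involutive order automorphism fixing every `W_n`; the
argument is therefore carried out for an abstract `MixedHodgeLattice`.

Deligne's pieces `I^{p,q}` lift the Hodge decomposition of `Gr_n`: the image of `I^{p,q}` in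
`Gr_n` is `F^p ∩ F̄^q`, and the staircase correction `∑_{j ≥ 1} F̄^{q-j} ∩ W_{n-j-1}` is
exactly what makes `I^{p,q}` meet `W_{n-1}` trivially. Spanning then follows by induction on the
weight, and independence by listing the pieces by weight and then by decreasing `p`. For the
conjugation condition, `σ I^{q,p}` lies modulo `I^{p,q}` both in a staircase of `F̄` and in a
staircase of `F` below weight `n`; by induction on the weight the first is spanned by pieces with
`p' < p`, the second by pieces with `p' ≥ p` or `q' < q`, and independence intersects the two.
Conversely the same induction puts every bigraduation with the conjugation condition inside
Deligne's pieces, and two independent spanning families one inside the other coincide.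
-/

open scoped TensorProduct

noncomputable section

/-- Complex conjugation on `ℂ`, as a `ℚ`-linear map. -/
def conjQ : ℂ →ₗ[ℚ] ℂ where
  toFun z := (starRingEnd ℂ) z
  map_add' x y := map_add _ x y
  map_smul' q z := by
    simp [Rat.smul_def]

variable (V : Type) [AddCommGroup V] [Module ℚ V]

/-- The conjugate-linear involution of the complexification `ℂ ⊗[ℚ] V`,
given by complex conjugation on the `ℂ` factor (viewed as a `ℚ`-linear map). -/
def sigmaV : ℂ ⊗[ℚ] V →ₗ[ℚ] ℂ ⊗[ℚ] V :=
  TensorProduct.map conjQ (LinearMap.id : V →ₗ[ℚ] V)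

/-- The `ℂ`-subspace generated by the conjugate of a `ℂ`-subspace of `ℂ ⊗[ℚ] V`;
since conjugation is conjugate-linear, this is just the image of the subspace. -/
def conjSpan (S : Submodule ℂ (ℂ ⊗[ℚ] V)) : Submodule ℂ (ℂ ⊗[ℚ] V) :=
  Submodule.span ℂ (⇑(sigmaV V) '' (S : Set (ℂ ⊗[ℚ] V)))

/-- The `ℂ`-subspace of `ℂ ⊗[ℚ] V` corresponding to `ℂ ⊗[ℚ] (W k)`. -/
def WC (W : ℤ → Submodule ℚ V) (k : ℤ) : Submodule ℂ (ℂ ⊗[ℚ] V) :=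
  Submodule.span ℂ ((fun v : V => (1 : ℂ) ⊗ₜ[ℚ] v) '' (W k : Set V))

/-- A mixed `ℚ`-Hodge structure on `V`: an increasing exhaustive weight filtration `W`
by `ℚ`-subspaces of `V`, a decreasing exhaustive Hodge filtration `F` by `ℂ`-subspaces of
`ℂ ⊗[ℚ] V`, such that for every `n` and `p`, the images of `F^p ∩ (ℂ ⊗ W_n)` and of
`σ (F^{n+1-p} ∩ (ℂ ⊗ W_n))` in `Gr_n = (ℂ ⊗ W_n)/(ℂ ⊗ W_{n-1})` form an internal direct
sum decomposition of `Gr_n` (stated in the lattice of subspaces of `ℂ ⊗[ℚ] V`). -/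
structure IsMixedHodgeStructure (W : ℤ → Submodule ℚ V)
    (F : ℤ → Submodule ℂ (ℂ ⊗[ℚ] V)) : Prop where
  mono_W : Monotone W
  anti_F : Antitone F
  W_eventually_bot : ∃ a : ℤ, ∀ k ≤ a, W k = ⊥
  W_eventually_top : ∃ b : ℤ, ∀ k : ℤ, b ≤ k → W k = ⊤
  F_eventually_top : ∃ a : ℤ, ∀ p ≤ a, F p = ⊤
  F_eventually_bot : ∃ b : ℤ, ∀ p : ℤ, b ≤ p → F p = ⊥
  graded_sup : ∀ n p : ℤ,
    (F p ⊓ WC V W n) ⊔ conjSpan V (F (n + 1 - p) ⊓ WC V W n) ⊔ WC V W (n - 1)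
      = WC V W n
  graded_inf : ∀ n p : ℤ,
    ((F p ⊓ WC V W n) ⊔ WC V W (n - 1)) ⊓
        (conjSpan V (F (n + 1 - p) ⊓ WC V W n) ⊔ WC V W (n - 1))
      = WC V W (n - 1)

/-- The subspace `⊕_{r<p, s<q} I^{r,s}`. -/
def lowerPieces (I : ℤ × ℤ → Submodule ℂ (ℂ ⊗[ℚ] V)) (p q : ℤ) :
    Submodule ℂ (ℂ ⊗[ℚ] V) :=
  ⨆ rs ∈ {rs : ℤ × ℤ | rs.1 < p ∧ rs.2 < q}, I rs

/-- A bigraduation of the mixed Hodge structure `(V, W, F)`: a family `I^{p,q}` of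
`ℂ`-subspaces of `ℂ ⊗[ℚ] V`, only finitely many nonzero, forming an internal direct sum
decomposition of `ℂ ⊗[ℚ] V`, with `ℂ ⊗ W_k = ⊕_{p+q ≤ k} I^{p,q}` and
`F^r = ⊕_{p ≥ r} I^{p,q}`. -/
structure IsBigraduation (W : ℤ → Submodule ℚ V) (F : ℤ → Submodule ℂ (ℂ ⊗[ℚ] V))
    (I : ℤ × ℤ → Submodule ℂ (ℂ ⊗[ℚ] V)) : Prop where
  finite : {pq : ℤ × ℤ | I pq ≠ ⊥}.Finite
  internal : DirectSum.IsInternal I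
  weight : ∀ k : ℤ, WC V W k = ⨆ pq ∈ {pq : ℤ × ℤ | pq.1 + pq.2 ≤ k}, I pq
  hodge : ∀ r : ℤ, F r = ⨆ pq ∈ {pq : ℤ × ℤ | r ≤ pq.1}, I pq

/-- The conjugation condition: for all `(p,q)`, the images of `I^{p,q}` and of
`σ(I^{q,p})` in `V_ℂ / ⊕_{r<p,s<q} I^{r,s}` coincide. -/
def ConjugationCondition (I : ℤ × ℤ → Submodule ℂ (ℂ ⊗[ℚ] V)) : Prop :=
  ∀ p q : ℤ,
    I (p, q) ⊔ lowerPieces V I p q = conjSpan V (I (q, p)) ⊔ lowerPieces V I p q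

section IndependentFamilies

open Function

variable {α ι : Type*} [CompleteLattice α] [IsModularLattice α] {f : ι → α}

theorem iSupIndep_of_disjoint_iSup_key_lt {β : Type*} [LinearOrder β] (key : ι → β)
    (hkey : Injective key) (hf : {i | f i ≠ ⊥}.Finite)
    (h : ∀ i, Disjoint (f i) (⨆ (j) (_ : key j < key i), f j)) : iSupIndep f := by
  classical
  have hsupIndep : ∀ s : Finset ι, s.SupIndep f := by
    intro s
    induction s using Finset.induction_on_max_value key with
    | empty => exact Finset.supIndep_empty f
    | insert i s hi hmax ih =>
      refine ih.insert ((h i).mono_right (Finset.sup_le fun j hj => le_iSup₂_of_le j ?_ le_rfl))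
      exact (hmax j hj).lt_of_ne (hkey.ne (ne_of_mem_of_not_mem hj hi))
  intro i
  have hdisj := Finset.supIndep_iff_disjoint_erase.1 (hsupIndep (insert i hf.toFinset)) i
    (Finset.mem_insert_self i _)
  refine hdisj.mono_right (iSup₂_le fun j hji => ?_)
  by_cases hj : f j = ⊥
  · exact hj.le.trans bot_le
  · exact Finset.le_sup
      (Finset.mem_erase.2 ⟨hji, Finset.mem_insert_of_mem (hf.mem_toFinset.2 hj)⟩)

theorem iSupIndep.biSup_inf_biSup (hind : iSupIndep f) (hf : {i | f i ≠ ⊥}.Finite)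
    (s t : Set ι) : (⨆ i ∈ s, f i) ⊓ (⨆ i ∈ t, f i) = ⨆ i ∈ s ∩ t, f i := by
  refine le_antisymm ?_ (le_inf (biSup_mono fun _ h => h.1) (biSup_mono fun _ h => h.2))
  set s' := s ∩ {i | f i ≠ ⊥}
  have hs : ⨆ i ∈ s, f i = (⨆ i ∈ s' ∩ t, f i) ⊔ ⨆ i ∈ s' \ t, f i := by
    rw [← iSup_union, Set.inter_union_sdiff]
    refine le_antisymm (iSup₂_le fun i hi => ?_) (biSup_mono fun _ h => h.1)
    by_cases hfi : f i = ⊥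
    · exact hfi.le.trans bot_le
    · exact le_iSup₂_of_le i ⟨hi, hfi⟩ le_rfl
  have hdisj : Disjoint (⨆ i ∈ s' \ t, f i) (⨆ i ∈ t, f i) :=
    hind.disjoint_biSup_biSup' Set.disjoint_sdiff_left (hf.subset fun _ h => h.1.2)
  rw [hs, sup_inf_assoc_of_le _ (biSup_mono fun _ h => h.2), hdisj.eq_bot, sup_bot_eq]
  exact biSup_mono fun _ h => ⟨h.1.1, h.2⟩

end IndependentFamilies

/-- The lattice shadow of a mixed Hodge structure: `conj` plays the role of complex conjugation
of subspaces, `W` of the complexified weight filtration and `F` of the Hodge filtration. -/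
structure MixedHodgeLattice (α : Type*) [CompleteLattice α] where
  conj : α ≃o α
  conj_conj : ∀ x, conj (conj x) = x
  W : ℤ → α
  F : ℤ → α
  monotone_W : Monotone W
  antitone_F : Antitone F
  conj_W : ∀ n, conj (W n) = W n
  W_eventually_bot : ∃ a : ℤ, ∀ n ≤ a, W n = ⊥
  W_eventually_top : ∃ b : ℤ, ∀ n, b ≤ n → W n = ⊤
  F_eventually_top : ∃ c : ℤ, ∀ p ≤ c, F p = ⊤
  F_eventually_bot : ∃ d : ℤ, ∀ p, d ≤ p → F p = ⊥
  graded_sup : ∀ n p : ℤ, F p ⊓ W n ⊔ conj (F (n + 1 - p) ⊓ W n) ⊔ W (n - 1) = W n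
  graded_inf : ∀ n p : ℤ,
    (F p ⊓ W n ⊔ W (n - 1)) ⊓ (conj (F (n + 1 - p) ⊓ W n) ⊔ W (n - 1)) = W (n - 1)

def lowerSup {α : Type*} [CompleteLattice α] (J : ℤ × ℤ → α) (p q : ℤ) : α :=
  ⨆ rs ∈ {rs : ℤ × ℤ | rs.1 < p ∧ rs.2 < q}, J rs

namespace MixedHodgeLattice

section CompleteLattice

variable {α : Type*} [CompleteLattice α] (H : MixedHodgeLattice α)

def Fbar (q : ℤ) : α := H.conj (H.F q)

/-- The filtration induced by `F` on `Gr_n = W n / W (n - 1)`, lifted to `W n`. -/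
def grF (p n : ℤ) : α := H.F p ⊓ H.W n ⊔ H.W (n - 1)

def grFbar (q n : ℤ) : α := H.Fbar q ⊓ H.W n ⊔ H.W (n - 1)

def stair (G : ℤ → α) (q m : ℤ) : α := ⨆ j : ℕ, G (q - j) ⊓ H.W (m - j)

def R (q n : ℤ) : α := H.Fbar q ⊓ H.W n ⊔ H.stair H.Fbar (q - 1) (n - 2)

/-- Deligne's `I^{p,q} = F^p ∩ W_n ∩ (F̄^q ∩ W_n + ∑_{j ≥ 1} F̄^{q-j} ∩ W_{n-j-1})`,
where `n = p + q`. -/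
def I (pq : ℤ × ℤ) : α := H.F pq.1 ⊓ H.W (pq.1 + pq.2) ⊓ H.R pq.2 (pq.1 + pq.2)

theorem antitone_Fbar : Antitone H.Fbar := fun _ _ h => H.conj.monotone (H.antitone_F h)

theorem conj_Fbar (q : ℤ) : H.conj (H.Fbar q) = H.F q := H.conj_conj _

theorem Fbar_eq_bot {q : ℤ} (h : H.F q = ⊥) : H.Fbar q = ⊥ := by
  rw [Fbar, h, map_bot]

theorem conj_F_inf_W (q n : ℤ) : H.conj (H.F q ⊓ H.W n) = H.Fbar q ⊓ H.W n := by
  rw [map_inf, H.conj_W]; rfl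

theorem W_pred_le_grF (p n : ℤ) : H.W (n - 1) ≤ H.grF p n := le_sup_right

theorem W_pred_le_grFbar (q n : ℤ) : H.W (n - 1) ≤ H.grFbar q n := le_sup_right

theorem grF_anti {p p' : ℤ} (h : p ≤ p') (n : ℤ) : H.grF p' n ≤ H.grF p n :=
  sup_le_sup_right (inf_le_inf_right _ (H.antitone_F h)) _

theorem grF_le_W (p n : ℤ) : H.grF p n ≤ H.W n := sup_le inf_le_right (H.monotone_W (by omega))

theorem conj_grF (p n : ℤ) : H.conj (H.grF p n) = H.grFbar p n := by
  rw [grF, map_sup, conj_F_inf_W, conj_W]; rfl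

theorem conj_grFbar (q n : ℤ) : H.conj (H.grFbar q n) = H.grF q n := by
  rw [← conj_grF, conj_conj]

theorem F_inf_W_sup_Fbar_inf_W_sup_W_pred {p q n : ℤ} (h : p + q = n + 1) :
    H.F p ⊓ H.W n ⊔ H.Fbar q ⊓ H.W n ⊔ H.W (n - 1) = H.W n := by
  rw [← conj_F_inf_W, show q = n + 1 - p by omega, H.graded_sup]

theorem grF_sup_grFbar {p q n : ℤ} (h : p + q = n + 1) : H.grF p n ⊔ H.grFbar q n = H.W n := by
  rw [grF, grFbar, sup_sup_sup_comm, sup_idem, H.F_inf_W_sup_Fbar_inf_W_sup_W_pred h]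

theorem grF_inf_grFbar {p q n : ℤ} (h : p + q = n + 1) :
    H.grF p n ⊓ H.grFbar q n = H.W (n - 1) := by
  rw [grF, grFbar, ← conj_F_inf_W, show q = n + 1 - p by omega, H.graded_inf]

section Stair

variable (G : ℤ → α)

theorem stair_le_W (q m : ℤ) : H.stair G q m ≤ H.W m :=
  iSup_le fun _ => inf_le_right.trans (H.monotone_W (by omega))

theorem inf_W_le_stair (q m : ℤ) : G q ⊓ H.W m ≤ H.stair G q m :=
  le_iSup_of_le 0 (by simp)

theorem stair_mono {q q' m m' : ℤ} (hq : q' ≤ q) (hm : m' - q' ≤ m - q) :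
    H.stair G q' m' ≤ H.stair G q m := by
  refine iSup_le fun j => le_iSup_of_le ((q - q').toNat + j) ?_
  rw [show q - (((q - q').toNat + j : ℕ) : ℤ) = q' - j by push_cast; omega]
  exact inf_le_inf_left _ (H.monotone_W (by push_cast; omega))

theorem stair_eq (q m : ℤ) : H.stair G q m = G q ⊓ H.W m ⊔ H.stair G (q - 1) (m - 1) := by
  refine le_antisymm (iSup_le fun j => ?_)
    (sup_le (H.inf_W_le_stair G q m) (H.stair_mono G (by omega) (by omega)))
  rcases j with _ | j
  · exact le_sup_of_le_left (by simp)
  · refine le_sup_of_le_right (le_iSup_of_le j (le_of_eq ?_))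
    congr 2 <;> push_cast <;> ring

theorem conj_stair (q m : ℤ) :
    H.conj (H.stair G q m) = H.stair (fun s => H.conj (G s)) q m := by
  simp only [stair, OrderIso.map_iSup, map_inf, conj_W]

end Stair

theorem conj_R (q n : ℤ) :
    H.conj (H.R q n) = H.F q ⊓ H.W n ⊔ H.stair H.F (q - 1) (n - 2) := by
  simp only [R, map_sup, map_inf, conj_stair, conj_Fbar, conj_W]

theorem R_le_grFbar (q n : ℤ) : H.R q n ≤ H.grFbar q n :=
  sup_le_sup_left ((H.stair_le_W _ _ _).trans (H.monotone_W (by omega))) _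

theorem R_le_stair (q n : ℤ) : H.R q n ≤ H.stair H.Fbar q n :=
  sup_le (H.inf_W_le_stair _ q n) (H.stair_mono _ (by omega) (by omega))

theorem I_le_F_inf_W (p q : ℤ) : H.I (p, q) ≤ H.F p ⊓ H.W (p + q) := inf_le_left

theorem I_le_F (p q : ℤ) : H.I (p, q) ≤ H.F p := inf_le_left.trans inf_le_left

theorem I_le_W (p q : ℤ) : H.I (p, q) ≤ H.W (p + q) := inf_le_left.trans inf_le_right

theorem I_le_R (p q : ℤ) : H.I (p, q) ≤ H.R q (p + q) := inf_le_right

theorem W_le_F_inf_W_sup_stair {p q m : ℤ} (h : p + q = m + 1) :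
    H.W m ≤ H.F p ⊓ H.W m ⊔ H.stair H.Fbar q m := by
  obtain ⟨a, ha⟩ := H.W_eventually_bot
  induction m using Int.strongRec (m := a + 1) generalizing p q with
  | lt m hm => rw [ha m (by omega)]; exact bot_le
  | ge m _ ih =>
    have hpred := ih (m - 1) (by omega) (p := p) (q := q - 1) (by omega)
    calc H.W m = H.F p ⊓ H.W m ⊔ H.Fbar q ⊓ H.W m ⊔ H.W (m - 1) :=
          (H.F_inf_W_sup_Fbar_inf_W_sup_W_pred h).symm
      _ ≤ H.F p ⊓ H.W m ⊔ H.stair H.Fbar q m := by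
        rw [H.stair_eq _ q m, sup_assoc]
        refine sup_le le_sup_left (sup_le (le_sup_of_le_right le_sup_left) (hpred.trans ?_))
        exact sup_le (le_sup_of_le_left (inf_le_inf_left _ (H.monotone_W (by omega))))
          (le_sup_of_le_right le_sup_right)

theorem grFbar_eq {p q n : ℤ} (h : p + q = n) :
    H.grFbar q n = H.F p ⊓ H.W (n - 1) ⊔ H.R q n := by
  refine le_antisymm (sup_le (le_sup_of_le_right le_sup_left) ?_)
    (sup_le (inf_le_right.trans (H.W_pred_le_grFbar _ _)) (H.R_le_grFbar q n))
  refine (H.W_le_F_inf_W_sup_stair (p := p) (q := q) (m := n - 1) (by omega)).trans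
    (sup_le_sup_left ?_ _)
  rw [H.stair_eq _ q, R, show n - 1 - 1 = n - 2 by ring]
  exact sup_le_sup_right (inf_le_inf_left _ (H.monotone_W (by omega))) _

theorem conj_I_le_Fbar_inf_W (p q : ℤ) : H.conj (H.I (q, p)) ≤ H.Fbar q ⊓ H.W (p + q) := by
  rw [add_comm, ← conj_F_inf_W]
  exact H.conj.monotone (H.I_le_F_inf_W q p)

theorem conj_I_le_F_inf_W_sup_stair (p q : ℤ) :
    H.conj (H.I (q, p)) ≤ H.F p ⊓ H.W (p + q) ⊔ H.stair H.F (p - 1) (p + q - 2) := by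
  rw [← conj_R, add_comm]
  exact H.conj.monotone (H.I_le_R q p)

theorem le_R_of_le_conj_sup_lowerSup {J : ℤ × ℤ → α}
    (hJW : ∀ p q, J (p, q) ≤ H.W (p + q)) (hJF : ∀ p q, J (p, q) ≤ H.F p)
    (hconj : ∀ p q, J (p, q) ≤ H.conj (J (q, p)) ⊔ lowerSup J p q) (p q : ℤ) :
    J (p, q) ≤ H.R q (p + q) := by
  obtain ⟨a, ha⟩ := H.W_eventually_bot
  suffices ∀ n p q, p + q = n → J (p, q) ≤ H.R q n from this _ p q rfl
  intro n
  induction n using Int.strongRec (m := a + 1) with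
  | lt n hn => intro p q h; exact (hJW p q).trans ((ha _ (by omega)).le.trans bot_le)
  | ge n _ ih =>
    intro p q h
    refine (hconj p q).trans (sup_le ?_ (iSup₂_le ?_))
    · refine (H.conj.monotone (le_inf (hJF q p) (hJW q p))).trans ?_
      rw [conj_F_inf_W, add_comm, h]
      exact le_sup_left
    · rintro ⟨p', q'⟩ (h' : p' < p ∧ q' < q)
      exact (ih _ (by omega) p' q' rfl).trans ((H.R_le_stair _ _).trans
        ((H.stair_mono _ (by omega) (by omega)).trans le_sup_right))

end CompleteLattice

section ModularLattice

variable {α : Type*} [CompleteLattice α] [IsModularLattice α] (H : MixedHodgeLattice α)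

theorem stair_inf_W_pred_le {G : ℤ → α} (hG : Antitone G) (q m : ℤ) :
    H.stair G q m ⊓ H.W (m - 1) ≤ H.stair G (q - 1) (m - 1) := by
  rw [H.stair_eq G q m, inf_comm, ← inf_sup_assoc_of_le _ (H.stair_le_W G _ _)]
  refine sup_le ((le_inf (inf_le_right.trans (inf_le_left.trans (hG (by omega)))) inf_le_left).trans
    (H.inf_W_le_stair G _ _)) le_rfl

theorem F_inf_stair_eq_bot {p q m : ℤ} (h : m + 1 ≤ p + q) :
    H.F p ⊓ H.stair H.Fbar q m = ⊥ := by
  obtain ⟨a, ha⟩ := H.W_eventually_bot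
  induction m using Int.strongRec (m := a + 1) generalizing p q with
  | lt m hm =>
    exact le_bot_iff.1 (inf_le_right.trans ((H.stair_le_W _ q m).trans (ha m (by omega)).le))
  | ge m _ ih =>
    have hW : H.F p ⊓ H.stair H.Fbar q m ≤ H.W (m - 1) := by
      rw [← H.grF_inf_grFbar (p := p) (q := m + 1 - p) (by omega), H.stair_eq _ q m]
      refine le_inf (le_sup_of_le_left (inf_le_inf_left _ ?_)) (inf_le_right.trans ?_)
      · exact sup_le inf_le_right ((H.stair_le_W _ _ _).trans (H.monotone_W (by omega)))
      · exact sup_le_sup (inf_le_inf_right _ (H.antitone_Fbar (by omega))) (H.stair_le_W _ _ _)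
    refine le_bot_iff.1 ?_
    calc H.F p ⊓ H.stair H.Fbar q m ≤ H.F p ⊓ H.stair H.Fbar (q - 1) (m - 1) :=
          le_inf inf_le_left
            ((le_inf inf_le_right hW).trans (H.stair_inf_W_pred_le H.antitone_Fbar q m))
      _ = ⊥ := ih (m - 1) (by omega) (by omega)

theorem R_inf_W_pred (q n : ℤ) : H.R q n ⊓ H.W (n - 1) = H.stair H.Fbar q (n - 1) := by
  rw [R, sup_comm, sup_inf_assoc_of_le _ ((H.stair_le_W _ _ _).trans (H.monotone_W (by omega))),
    inf_assoc, inf_eq_right.2 (H.monotone_W (by omega)), H.stair_eq _ q (n - 1),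
    show n - 1 - 1 = n - 2 by ring, sup_comm]

theorem I_inf_W_pred (p q : ℤ) : H.I (p, q) ⊓ H.W (p + q - 1) = ⊥ := by
  refine le_bot_iff.1 ?_
  calc H.I (p, q) ⊓ H.W (p + q - 1) ≤ H.F p ⊓ (H.R q (p + q) ⊓ H.W (p + q - 1)) :=
        le_inf (inf_le_left.trans (H.I_le_F p q)) (inf_le_inf_right _ (H.I_le_R p q))
    _ = ⊥ := by rw [R_inf_W_pred, H.F_inf_stair_eq_bot (by omega)]

theorem I_eq_bot_of_le_W_pred {p q : ℤ} (h : H.I (p, q) ≤ H.W (p + q - 1)) :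
    H.I (p, q) = ⊥ := by
  rw [← inf_eq_left.2 h, I_inf_W_pred]

theorem grF_inf_grFbar_eq_I_sup (p q : ℤ) :
    H.grF p (p + q) ⊓ H.grFbar q (p + q) = H.I (p, q) ⊔ H.W (p + q - 1) := by
  rw [grF, sup_comm, sup_inf_assoc_of_le _ (H.W_pred_le_grFbar q (p + q)),
    H.grFbar_eq rfl, sup_comm (H.F p ⊓ _), ← inf_sup_assoc_of_le _
      (inf_le_inf_left _ (H.monotone_W (by omega)))]
  exact le_antisymm (sup_le le_sup_right (sup_le le_sup_left (inf_le_right.trans le_sup_right)))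
    (sup_le (le_sup_of_le_right le_sup_left) le_sup_left)

theorem grF_le_iSup_I_sup_W_pred (r n : ℤ) :
    H.grF r n ≤ (⨆ (p) (_ : r ≤ p), H.I (p, n - p)) ⊔ H.W (n - 1) := by
  obtain ⟨d, hd⟩ := H.F_eventually_bot
  have hbase : ∀ r, d ≤ r →
      H.grF r n ≤ (⨆ (p) (_ : r ≤ p), H.I (p, n - p)) ⊔ H.W (n - 1) :=
    fun r hr => sup_le_sup_right (by rw [hd r hr, bot_inf_eq]; exact bot_le) _
  refine (le_total d r).elim (hbase r) fun hr => ?_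
  induction r, hr using Int.leInductionDown with
  | base => exact hbase d le_rfl
  | pred r _ ih =>
    have hsplit : H.grF (r - 1) n = H.I (r - 1, n - (r - 1)) ⊔ H.W (n - 1) ⊔ H.grF r n := by
      have hgr := H.grF_inf_grFbar_eq_I_sup (r - 1) (n - (r - 1))
      rw [add_sub_cancel] at hgr
      calc H.grF (r - 1) n = H.grF (r - 1) n ⊓ (H.grFbar (n - (r - 1)) n ⊔ H.grF r n) := by
            rw [sup_comm, H.grF_sup_grFbar (by omega), inf_eq_left.2 (H.grF_le_W _ _)]
        _ = _ := by rw [← inf_sup_assoc_of_le _ (H.grF_anti (by omega) n), hgr]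
    rw [hsplit]
    refine sup_le (sup_le_sup_right
      (le_iSup₂_of_le (f := fun p (_ : r - 1 ≤ p) => H.I (p, n - p)) (r - 1) le_rfl le_rfl) _)
      (ih.trans (sup_le_sup_right (biSup_mono fun _ h => by omega) _))

theorem F_inf_W_eq_iSup_I (r n : ℤ) :
    H.F r ⊓ H.W n = ⨆ pq ∈ {pq : ℤ × ℤ | r ≤ pq.1 ∧ pq.1 + pq.2 ≤ n}, H.I pq := by
  refine le_antisymm ?_ (iSup₂_le fun pq h => le_inf ((H.I_le_F pq.1 pq.2).trans
    (H.antitone_F h.1)) ((H.I_le_W pq.1 pq.2).trans (H.monotone_W h.2)))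
  obtain ⟨a, ha⟩ := H.W_eventually_bot
  induction n using Int.strongRec (m := a + 1) with
  | lt n hn => rw [ha n (by omega), inf_bot_eq]; exact bot_le
  | ge n _ ih =>
    have hY : ⨆ (p) (_ : r ≤ p), H.I (p, n - p) ≤ H.F r :=
      iSup₂_le fun p hp => (H.I_le_F _ _).trans (H.antitone_F hp)
    calc H.F r ⊓ H.W n ≤ H.F r ⊓ ((⨆ (p) (_ : r ≤ p), H.I (p, n - p)) ⊔ H.W (n - 1)) :=
          le_inf inf_le_left
            ((le_sup_left : _ ≤ H.grF r n).trans (H.grF_le_iSup_I_sup_W_pred r n))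
      _ = (⨆ (p) (_ : r ≤ p), H.I (p, n - p)) ⊔ H.F r ⊓ H.W (n - 1) := by
          rw [sup_comm, ← inf_sup_assoc_of_le _ hY, sup_comm]
      _ ≤ _ := by
          refine sup_le
            (iSup₂_le fun p hp => le_iSup₂_of_le (p, n - p) ⟨hp, by simp⟩ le_rfl)
            ((ih (n - 1) (by omega)).trans (biSup_mono fun _ h => ⟨h.1, h.2.trans (by omega)⟩))

theorem W_eq_iSup_I (k : ℤ) :
    H.W k = ⨆ pq ∈ {pq : ℤ × ℤ | pq.1 + pq.2 ≤ k}, H.I pq := by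
  obtain ⟨c, hc⟩ := H.F_eventually_top
  refine le_antisymm ?_ (iSup₂_le fun pq h => (H.I_le_W pq.1 pq.2).trans (H.monotone_W h))
  rw [← top_inf_eq (H.W k), ← hc c le_rfl, F_inf_W_eq_iSup_I]
  exact biSup_mono fun _ h => h.2

theorem F_eq_iSup_I (r : ℤ) : H.F r = ⨆ pq ∈ {pq : ℤ × ℤ | r ≤ pq.1}, H.I pq := by
  obtain ⟨b, hb⟩ := H.W_eventually_top
  refine le_antisymm ?_ (iSup₂_le fun pq h => (H.I_le_F pq.1 pq.2).trans (H.antitone_F h))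
  rw [← inf_top_eq (H.F r), ← hb b le_rfl, F_inf_W_eq_iSup_I]
  exact biSup_mono fun _ h => h.1

theorem iSup_I_eq_top : ⨆ pq, H.I pq = ⊤ := by
  obtain ⟨b, hb⟩ := H.W_eventually_top
  rw [eq_top_iff, ← hb b le_rfl, W_eq_iSup_I]
  exact iSup₂_le fun pq _ => le_iSup H.I pq

theorem finite_support_I : {pq | H.I pq ≠ ⊥}.Finite := by
  obtain ⟨a, ha⟩ := H.W_eventually_bot
  obtain ⟨d, hd⟩ := H.F_eventually_bot
  refine ((Set.finite_Ioo (a - d) d).prod (Set.finite_Ioo (a - d) d)).subset ?_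
  rintro ⟨p, q⟩ hpq
  have hp : p < d := by
    by_contra hp
    exact hpq (le_bot_iff.1 ((H.I_le_F p q).trans (hd p (by omega)).le))
  have hq : q < d := by
    by_contra hq
    refine hpq (H.I_eq_bot_of_le_W_pred ((H.I_le_R p q).trans (sup_le ?_ ?_)))
    · rw [H.Fbar_eq_bot (hd q (by omega)), bot_inf_eq]; exact bot_le
    · exact (H.stair_le_W _ _ _).trans (H.monotone_W (by omega))
  have hn : a < p + q := by
    by_contra hn
    exact hpq (le_bot_iff.1 ((H.I_le_W p q).trans (ha _ (by omega)).le))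
  exact ⟨⟨by omega, hp⟩, ⟨by omega, hq⟩⟩

theorem disjoint_I_grF_succ (p q : ℤ) : Disjoint (H.I (p, q)) (H.grF (p + 1) (p + q)) := by
  rw [disjoint_iff, ← H.I_inf_W_pred p q, ← H.grF_inf_grFbar (p := p + 1) (q := q) (by omega)]
  exact le_antisymm (le_inf inf_le_left (le_inf inf_le_right
    (inf_le_left.trans ((H.I_le_R p q).trans (H.R_le_grFbar _ _))))) (inf_le_inf_left _ inf_le_left)

theorem iSupIndep_I : iSupIndep H.I := by
  -- every piece listed before `I^{p,q}` lies in `grF (p + 1) (p + q)`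
  refine iSupIndep_of_disjoint_iSup_key_lt (fun pq => toLex (pq.1 + pq.2, -pq.1)) ?_
    H.finite_support_I fun ⟨p, q⟩ => (H.disjoint_I_grF_succ p q).mono_right ?_
  · intro x y hxy
    simp only [toLex_inj, Prod.mk.injEq] at hxy
    ext <;> omega
  · refine iSup₂_le fun ⟨p', q'⟩ h => ?_
    rcases Prod.Lex.toLex_lt_toLex.1 h with h | ⟨h, h'⟩
    · exact (H.I_le_W p' q').trans ((H.monotone_W (by omega)).trans (H.W_pred_le_grF _ _))
    · exact le_sup_of_le_left (le_inf ((H.I_le_F p' q').trans (H.antitone_F (by omega)))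
        ((H.I_le_W p' q').trans (H.monotone_W (by omega))))

theorem conj_I_le_I_sup_stair (p q : ℤ) :
    H.conj (H.I (q, p)) ≤ H.I (p, q) ⊔ H.stair H.Fbar q (p + q - 1) := by
  have hgr : H.conj (H.I (q, p)) ≤ H.I (p, q) ⊔ H.W (p + q - 1) :=
    calc H.conj (H.I (q, p)) ≤ H.conj (H.grF q (p + q) ⊓ H.grFbar p (p + q)) := by
          rw [add_comm]
          exact H.conj.monotone (le_inf (le_sup_of_le_left inf_le_left)
            ((H.I_le_R q p).trans (H.R_le_grFbar _ _)))
      _ = H.I (p, q) ⊔ H.W (p + q - 1) := by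
          rw [map_inf, conj_grF, conj_grFbar, inf_comm, grF_inf_grFbar_eq_I_sup]
  have hR : H.conj (H.I (q, p)) ≤ H.R q (p + q) := (H.conj_I_le_Fbar_inf_W p q).trans le_sup_left
  calc H.conj (H.I (q, p)) ≤ (H.I (p, q) ⊔ H.W (p + q - 1)) ⊓ H.R q (p + q) := le_inf hgr hR
    _ = H.I (p, q) ⊔ H.stair H.Fbar q (p + q - 1) := by
      rw [sup_inf_assoc_of_le _ (H.I_le_R p q), inf_comm, R_inf_W_pred]

theorem conj_I_le_I_sup_inf (p q : ℤ) :
    H.conj (H.I (q, p)) ≤ H.I (p, q) ⊔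
      (H.F p ⊓ H.W (p + q - 1) ⊔ H.stair H.F (p - 1) (p + q - 2)) ⊓
        H.stair H.Fbar q (p + q - 1) := by
  set n := p + q
  have hstairF : H.stair H.F (p - 1) (n - 2) ≤ H.W (n - 1) :=
    (H.stair_le_W _ _ _).trans (H.monotone_W (by omega))
  have hdrop : (H.F p ⊓ H.W n ⊔ H.stair H.F (p - 1) (n - 2)) ⊓ H.W (n - 1) ≤
      H.F p ⊓ H.W (n - 1) ⊔ H.stair H.F (p - 1) (n - 2) := by
    rw [sup_comm, sup_inf_assoc_of_le _ hstairF, sup_comm, inf_assoc,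
      inf_eq_right.2 (H.monotone_W (by omega))]
  calc H.conj (H.I (q, p))
      ≤ (H.I (p, q) ⊔ H.stair H.Fbar q (n - 1)) ⊓
          (H.F p ⊓ H.W n ⊔ H.stair H.F (p - 1) (n - 2)) :=
        le_inf (H.conj_I_le_I_sup_stair p q) (H.conj_I_le_F_inf_W_sup_stair p q)
    _ = H.I (p, q) ⊔
          H.stair H.Fbar q (n - 1) ⊓ (H.F p ⊓ H.W n ⊔ H.stair H.F (p - 1) (n - 2)) :=
        sup_inf_assoc_of_le _ (le_sup_of_le_left (H.I_le_F_inf_W p q))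
    _ ≤ _ := by
        refine sup_le_sup_left ?_ _
        rw [inf_comm]
        refine le_inf ((le_inf inf_le_left (inf_le_right.trans (H.stair_le_W _ _ _))).trans hdrop)
          inf_le_right

theorem F_inf_W_pred_sup_stair_le (p q : ℤ) :
    H.F p ⊓ H.W (p + q - 1) ⊔ H.stair H.F (p - 1) (p + q - 2) ≤
      ⨆ pq ∈ {pq : ℤ × ℤ | p ≤ pq.1 ∨ pq.2 < q}, H.I pq := by
  refine sup_le ?_ (iSup_le fun j => ?_) <;> rw [F_inf_W_eq_iSup_I]
  · exact biSup_mono fun _ h => Or.inl h.1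
  · exact biSup_mono fun pq (h : p - 1 - j ≤ pq.1 ∧ pq.1 + pq.2 ≤ p + q - 2 - j) =>
      Or.inr (by omega)

theorem stair_Fbar_le_of_conj_I_le {p q : ℤ}
    (ih : ∀ p' q', p' + q' < p + q →
      H.conj (H.I (q', p')) ≤ H.I (p', q') ⊔ lowerSup H.I p' q') :
    H.stair H.Fbar q (p + q - 1) ≤ ⨆ pq ∈ {pq : ℤ × ℤ | pq.1 < p}, H.I pq := by
  refine iSup_le fun j => ?_
  rw [← conj_F_inf_W, F_inf_W_eq_iSup_I, OrderIso.map_iSup₂]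
  refine iSup₂_le ?_
  rintro ⟨a, b⟩ (h : q - j ≤ a ∧ a + b ≤ p + q - 1 - j)
  refine (ih b a (by omega)).trans (sup_le ?_ ?_)
  · exact le_iSup₂_of_le (b, a) (show b < p by omega) le_rfl
  · exact biSup_mono fun pq (h' : pq.1 < b ∧ pq.2 < a) => (show pq.1 < p by omega)

theorem conj_I_le (p q : ℤ) : H.conj (H.I (q, p)) ≤ H.I (p, q) ⊔ lowerSup H.I p q := by
  obtain ⟨a, ha⟩ := H.W_eventually_bot
  suffices ∀ n p q, p + q = n → H.conj (H.I (q, p)) ≤ H.I (p, q) ⊔ lowerSup H.I p q from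
    this _ p q rfl
  intro n
  induction n using Int.strongRec (m := a + 1) with
  | lt n hn =>
    intro p q h
    rw [le_bot_iff.1 ((H.I_le_W q p).trans (ha _ (by omega)).le), map_bot]
    exact bot_le
  | ge n _ ih =>
    intro p q h
    refine (H.conj_I_le_I_sup_inf p q).trans (sup_le_sup_left ?_ _)
    refine (inf_le_inf (H.F_inf_W_pred_sup_stair_le p q)
      (H.stair_Fbar_le_of_conj_I_le fun p' q' h' => ih _ (by omega) p' q' rfl)).trans ?_
    rw [H.iSupIndep_I.biSup_inf_biSup H.finite_support_I]
    exact biSup_mono fun pq (h' : (p ≤ pq.1 ∨ pq.2 < q) ∧ pq.1 < p) => ⟨h'.2, by omega⟩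

theorem conj_lowerSup_I_le (p q : ℤ) : H.conj (lowerSup H.I q p) ≤ lowerSup H.I p q := by
  rw [lowerSup, OrderIso.map_iSup₂]
  refine iSup₂_le ?_
  rintro ⟨a, b⟩ (h : a < q ∧ b < p)
  refine (H.conj_I_le b a).trans (sup_le ?_ ?_)
  · exact le_iSup₂_of_le (b, a) ⟨h.2, h.1⟩ le_rfl
  · exact biSup_mono fun pq (h' : pq.1 < b ∧ pq.2 < a) => ⟨by omega, by omega⟩

theorem I_sup_lowerSup_eq (p q : ℤ) :
    H.I (p, q) ⊔ lowerSup H.I p q = H.conj (H.I (q, p)) ⊔ lowerSup H.I p q := by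
  refine le_antisymm (sup_le ?_ le_sup_right) (sup_le (H.conj_I_le p q) le_sup_right)
  calc H.I (p, q) = H.conj (H.conj (H.I (p, q))) := (H.conj_conj _).symm
    _ ≤ H.conj (H.I (q, p) ⊔ lowerSup H.I q p) := H.conj.monotone (H.conj_I_le q p)
    _ ≤ _ := by rw [map_sup]; exact sup_le_sup_left (H.conj_lowerSup_I_le p q) _

theorem eq_I {J : ℤ × ℤ → α}
    (hW : ∀ k, H.W k = ⨆ pq ∈ {pq : ℤ × ℤ | pq.1 + pq.2 ≤ k}, J pq)
    (hF : ∀ r, H.F r = ⨆ pq ∈ {pq : ℤ × ℤ | r ≤ pq.1}, J pq)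
    (hconj : ∀ p q, J (p, q) ⊔ lowerSup J p q = H.conj (J (q, p)) ⊔ lowerSup J p q) :
    J = H.I := by
  have hJW (p q : ℤ) : J (p, q) ≤ H.W (p + q) :=
    (hW _).symm ▸ le_iSup₂_of_le (p, q) (show p + q ≤ p + q from le_rfl) le_rfl
  have hJF (p q : ℤ) : J (p, q) ≤ H.F p :=
    (hF _).symm ▸ le_iSup₂_of_le (p, q) (show p ≤ p from le_rfl) le_rfl
  have hJR := H.le_R_of_le_conj_sup_lowerSup hJW hJF fun p q => le_sup_left.trans (hconj p q).le
  have hJtop : ⨆ pq, J pq = ⊤ := by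
    obtain ⟨b, hb⟩ := H.W_eventually_top
    rw [eq_top_iff, ← hb b le_rfl, hW]
    exact iSup₂_le fun pq _ => le_iSup J pq
  exact (H.iSupIndep_I.le_iff_eq_of_iSup_eq_top hJtop).1
    fun pq => le_inf (le_inf (hJF _ _) (hJW _ _)) (hJR _ _)

end ModularLattice

end MixedHodgeLattice

section Complexification

variable {V}

theorem sigmaV_tmul (z : ℂ) (v : V) :
    sigmaV V (z ⊗ₜ[ℚ] v) = starRingEnd ℂ z ⊗ₜ[ℚ] v := rfl

theorem sigmaV_sigmaV (x : ℂ ⊗[ℚ] V) : sigmaV V (sigmaV V x) = x := by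
  induction x with
  | zero => simp
  | tmul z v => simp [sigmaV_tmul]
  | add x y hx hy => simp [hx, hy]

theorem sigmaV_smul (c : ℂ) (x : ℂ ⊗[ℚ] V) :
    sigmaV V (c • x) = starRingEnd ℂ c • sigmaV V x := by
  induction x with
  | zero => simp
  | tmul z v => simp [TensorProduct.smul_tmul', sigmaV_tmul]
  | add x y hx hy => simp [hx, hy]

def sigmaSemilinear : ℂ ⊗[ℚ] V →ₗ⋆[ℂ] ℂ ⊗[ℚ] V where
  toFun := sigmaV V
  map_add' := map_add _
  map_smul' := sigmaV_smul

theorem conjSpan_eq_comap (S : Submodule ℂ (ℂ ⊗[ℚ] V)) :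
    conjSpan V S = S.comap sigmaSemilinear := by
  refine le_antisymm (Submodule.span_le.2 ?_)
    fun x hx => Submodule.subset_span ⟨_, hx, sigmaV_sigmaV x⟩
  rintro _ ⟨y, hy, rfl⟩
  simpa [sigmaSemilinear, sigmaV_sigmaV] using hy

theorem mem_conjSpan {S : Submodule ℂ (ℂ ⊗[ℚ] V)} {x : ℂ ⊗[ℚ] V} :
    x ∈ conjSpan V S ↔ sigmaV V x ∈ S := by
  rw [conjSpan_eq_comap]; rfl

theorem conjSpan_conjSpan (S : Submodule ℂ (ℂ ⊗[ℚ] V)) : conjSpan V (conjSpan V S) = S := by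
  ext x; rw [mem_conjSpan, mem_conjSpan, sigmaV_sigmaV]

theorem conjSpan_mono : Monotone (conjSpan V) :=
  fun _ _ h _ hx => mem_conjSpan.2 (h (mem_conjSpan.1 hx))

def conjSpanIso : Submodule ℂ (ℂ ⊗[ℚ] V) ≃o Submodule ℂ (ℂ ⊗[ℚ] V) :=
  (Function.Involutive.toPerm _ conjSpan_conjSpan).toOrderIso conjSpan_mono conjSpan_mono

theorem WC_eq_baseChange (W : ℤ → Submodule ℚ V) (k : ℤ) :
    WC V W k = (W k).baseChange ℂ := by
  rw [Submodule.baseChange_eq_span, Submodule.map_coe]; rfl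

theorem conjSpan_WC (W : ℤ → Submodule ℚ V) (k : ℤ) : conjSpan V (WC V W k) = WC V W k := by
  have h : WC V W k ≤ conjSpan V (WC V W k) := by
    refine Submodule.span_le.2 ?_
    rintro _ ⟨v, hv, rfl⟩
    rw [SetLike.mem_coe, mem_conjSpan, sigmaV_tmul, map_one]
    exact Submodule.subset_span ⟨v, hv, rfl⟩
  exact le_antisymm (by simpa only [conjSpan_conjSpan] using conjSpan_mono h) h

end Complexification

def IsMixedHodgeStructure.toMixedHodgeLattice {W : ℤ → Submodule ℚ V}
    {F : ℤ → Submodule ℂ (ℂ ⊗[ℚ] V)} (h : IsMixedHodgeStructure V W F) :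
    MixedHodgeLattice (Submodule ℂ (ℂ ⊗[ℚ] V)) where
  conj := conjSpanIso
  conj_conj := conjSpan_conjSpan
  W := WC V W
  F := F
  monotone_W _ _ hmn := by
    simpa only [WC_eq_baseChange] using Submodule.baseChange_mono ℂ (h.mono_W hmn)
  antitone_F := h.anti_F
  conj_W := conjSpan_WC W
  W_eventually_bot := h.W_eventually_bot.imp fun _ ha k hk => by
    rw [WC_eq_baseChange, ha k hk, Submodule.baseChange_bot]
  W_eventually_top := h.W_eventually_top.imp fun _ hb k hk => by
    rw [WC_eq_baseChange, hb k hk, Submodule.baseChange_top]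
  F_eventually_top := h.F_eventually_top
  F_eventually_bot := h.F_eventually_bot
  graded_sup := h.graded_sup
  graded_inf := h.graded_inf

theorem existsUnique_deligne_bigraduation
    (W : ℤ → Submodule ℚ V) (F : ℤ → Submodule ℂ (ℂ ⊗[ℚ] V))
    (h : IsMixedHodgeStructure V W F) :
    ∃! I : ℤ × ℤ → Submodule ℂ (ℂ ⊗[ℚ] V),
      IsBigraduation V W F I ∧ ConjugationCondition V I := by
  let H := h.toMixedHodgeLattice
  have hinternal : DirectSum.IsInternal H.I :=
    (DirectSum.isInternal_submodule_iff_iSupIndep_and_iSup_eq_top _).2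
      ⟨H.iSupIndep_I, H.iSup_I_eq_top⟩
  refine ⟨H.I, ⟨⟨H.finite_support_I, hinternal, H.W_eq_iSup_I, H.F_eq_iSup_I⟩,
    H.I_sup_lowerSup_eq⟩, ?_⟩
  · rintro J ⟨hJ, hconj⟩
    exact H.eq_I hJ.weight hJ.hodge hconj
end
end

section
/- Let l ∈ ℤ, let a ∈ ℂ with a ≠ 0, let r > 0, and let f : ℂ → ℂ be analytic on a neighbourhood of the closed disc {z ∈ ℂ : |z| ≤ r}, with f(0) = 0 and a + f(z) ≠ 0 for every z with |z| ≤ r. Define q(z) := z^l·(a + f(z)) for z ≠ 0, where z^l denotes the integer (zpow) power. Then the circle integral over the positively oriented circle of radius r centred at 0 satisfies ∮_{|z|=r} q′(z)/q(z) dz = 2πi·l; in other words, the winding number around 0 of the loop t ↦ q(r·e^{2πit}) equals l. -/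
open Metric

/-! On the circle, `q'/q = l/z + (a + f)'/(a + f)`. The first term integrates to `2πi·l`; the
second is holomorphic on the closed disc because `a + f` does not vanish there, so its integral
vanishes by Cauchy's theorem. -/

theorem AnalyticAt.logDeriv {𝕜 𝕜' : Type*} [NontriviallyNormedField 𝕜]
    [NontriviallyNormedField 𝕜'] [NormedAlgebra 𝕜 𝕜'] [CompleteSpace 𝕜'] {g : 𝕜 → 𝕜'} {z : 𝕜}
    (hg : AnalyticAt 𝕜 g z) (hz : g z ≠ 0) : AnalyticAt 𝕜 (logDeriv g) z :=
  hg.deriv.div hg hz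

theorem logDeriv_sub_zpow_mul {g : ℂ → ℂ} {c z : ℂ} (hz : z ≠ c) (hg : DifferentiableAt ℂ g z)
    (hgz : g z ≠ 0) (l : ℤ) :
    logDeriv (fun w => (w - c) ^ l * g w) z = l * (z - c)⁻¹ + logDeriv g z := by
  have hzc : z - c ≠ 0 := sub_ne_zero.2 hz
  rw [logDeriv_mul (f := fun w => (w - c) ^ l) z (zpow_ne_zero l hzc) hgz
      (by fun_prop (disch := exact Or.inl hzc)) hg,
    logDeriv_fun_zpow (by fun_prop), logDeriv_apply, deriv_sub_const, deriv_id'', one_div]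

theorem circleIntegral_logDeriv_eq_zero {g : ℂ → ℂ} {c : ℂ} {R : ℝ} (hR : 0 ≤ R)
    (hg : AnalyticOnNhd ℂ g (closedBall c R)) (hne : ∀ z ∈ closedBall c R, g z ≠ 0) :
    ∮ z in C(c, R), logDeriv g z = 0 :=
  Complex.circleIntegral_eq_zero_of_differentiable_on_off_countable hR Set.countable_empty
    (fun z hz => ((hg z hz).logDeriv (hne z hz)).continuousAt.continuousWithinAt)
    (fun z hz => ((hg z (ball_subset_closedBall hz.1)).logDeriv
      (hne z (ball_subset_closedBall hz.1))).differentiableAt)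

theorem circleIntegral_logDeriv_sub_zpow_mul {g : ℂ → ℂ} {c : ℂ} {R : ℝ} (hR : 0 < R)
    (hg : AnalyticOnNhd ℂ g (closedBall c R)) (hne : ∀ z ∈ closedBall c R, g z ≠ 0) (l : ℤ) :
    ∮ z in C(c, R), logDeriv (fun w => (w - c) ^ l * g w) z = 2 * Real.pi * Complex.I * l := by
  have hsphere : ∀ z ∈ sphere c R, z ≠ c := fun z hz => ne_of_mem_sphere hz hR.ne'
  have hsplit : Set.EqOn (logDeriv fun w => (w - c) ^ l * g w)
      (fun z => l * (z - c)⁻¹ + logDeriv g z) (sphere c R) := fun z hz =>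
    logDeriv_sub_zpow_mul (hsphere z hz) (hg z (sphere_subset_closedBall hz)).differentiableAt
      (hne z (sphere_subset_closedBall hz)) l
  have hpole : CircleIntegrable (fun z => (l : ℂ) * (z - c)⁻¹) c R :=
    (continuousOn_const.mul ((continuousOn_id.sub continuousOn_const).inv₀
      fun z hz => sub_ne_zero.2 (hsphere z hz))).circleIntegrable hR.le
  have hregular : CircleIntegrable (logDeriv g) c R :=
    ContinuousOn.circleIntegrable hR.le fun z hz =>
      ((hg z (sphere_subset_closedBall hz)).logDeriv
        (hne z (sphere_subset_closedBall hz))).continuousAt.continuousWithinAt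
  rw [circleIntegral.integral_congr hR.le hsplit, circleIntegral.integral_add hpole hregular,
    circleIntegral.integral_const_mul, circleIntegral.integral_sub_center_inv c hR.ne',
    circleIntegral_logDeriv_eq_zero hR.le hg hne]
  ring

theorem circleIntegral_logDeriv_eq_general (l : ℤ) (a : ℂ) (r : ℝ) (hr : 0 < r)
    (f : ℂ → ℂ)
    (hf : ∀ z ∈ closedBall (0 : ℂ) r, AnalyticAt ℂ f z)
    (hne : ∀ z ∈ closedBall (0 : ℂ) r, a + f z ≠ 0) :
    (∮ z in C(0, r), deriv (fun w : ℂ => w ^ l * (a + f w)) z / (z ^ l * (a + f z)))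
      = 2 * Real.pi * Complex.I * (l : ℂ) := by
  have hg : AnalyticOnNhd ℂ (fun w => a + f w) (closedBall 0 r) := fun z hz =>
    analyticAt_const.add (hf z hz)
  have hlogDeriv := circleIntegral_logDeriv_sub_zpow_mul hr hg hne l
  simp only [sub_zero] at hlogDeriv
  -- the integrand of the goal is `logDeriv (fun w => w ^ l * (a + f w)) z` unfolded
  exact hlogDeriv

/-- for `q(z) = z^l (a + f(z))` with `a ≠ 0`, `f` analytic on a
neighbourhood of the closed disc of radius `r > 0`, `f(0) = 0` and `a + f` nonvanishing
on that disc, the integral of the logarithmic derivative `q'/q` over the circle of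
radius `r` centred at `0` equals `2πi·l`. -/
theorem circleIntegral_logDeriv_eq (l : ℤ) (a : ℂ) (ha : a ≠ 0) (r : ℝ) (hr : 0 < r)
    (f : ℂ → ℂ)
    (hf : ∀ z ∈ closedBall (0 : ℂ) r, AnalyticAt ℂ f z)
    (hf0 : f 0 = 0)
    (hne : ∀ z ∈ closedBall (0 : ℂ) r, a + f z ≠ 0) :
    (∮ z in C(0, r), deriv (fun w : ℂ => w ^ l * (a + f w)) z / (z ^ l * (a + f z)))
      = 2 * Real.pi * Complex.I * (l : ℂ) :=
  circleIntegral_logDeriv_eq_general l a r hr f hf hne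
end

section
/- For every pair of integers (a, b) ≠ (0, 0) and all roots of unity ζ₁, ζ₂, the curve C is not contained in the torsion translate {(ζ₁·x^a, ζ₂·x^b) : x ∈ ℂ^×}: there exists a point (x₁, x₂) ∈ C such that for no x ∈ ℂ^× does one have both x₁ = ζ₁·x^a and x₂ = ζ₂·x^b. -/
/-!
Roots of unity have absolute value one, so on the translate `|x₁| = |x|^a` and `|x₂| = |x|^b`.
If `a = 0` this forces `|x₁| = 1`, which fails at `(2, 4/3) ∈ C`. Otherwise `|x₁| = 1` forces
`|x| = 1` and hence `|x₂| = 1`, which fails at `(1, 1/3) ∈ C`.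
-/

/-- `ζ` is a root of unity in `ℂ`. -/
def IsRootOfUnity (ζ : ℂ) : Prop := ∃ n : ℕ, 0 < n ∧ ζ ^ n = 1

/-- The curve `C = {(x₁, x₂) ∈ ℂ^× × ℂ^× : x₁² = 3·x₂}` inside `ℂ × ℂ`. -/
def curveC : Set (ℂ × ℂ) := {p : ℂ × ℂ | p.1 ≠ 0 ∧ p.2 ≠ 0 ∧ p.1 ^ 2 = 3 * p.2}

lemma IsRootOfUnity.norm_eq_one {ζ : ℂ} (h : IsRootOfUnity ζ) : ‖ζ‖ = 1 :=
  let ⟨_, hn, hζ⟩ := h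
  Complex.norm_eq_one_of_pow_eq_one hζ hn.ne'

lemma norm_mul_zpow_of_norm_eq_one {K : Type*} [NormedDivisionRing K] {ζ : K} (hζ : ‖ζ‖ = 1)
    (x : K) (a : ℤ) : ‖ζ * x ^ a‖ = ‖x‖ ^ a := by
  rw [norm_mul, hζ, one_mul, norm_zpow]

theorem curveC_not_subset_torsion_translate_general (a b : ℤ)
    (ζ₁ ζ₂ : ℂ) (h₁ : IsRootOfUnity ζ₁) (h₂ : IsRootOfUnity ζ₂) :
    ∃ p ∈ curveC, ∀ x : ℂ, x ≠ 0 → ¬(p.1 = ζ₁ * x ^ a ∧ p.2 = ζ₂ * x ^ b) := by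
  by_cases ha : a = 0
  · refine ⟨(2, 4 / 3), by norm_num [curveC], fun x _ ⟨hp₁, _⟩ => ?_⟩
    have h := congrArg norm hp₁
    rw [norm_mul_zpow_of_norm_eq_one h₁.norm_eq_one, ha, zpow_zero] at h
    norm_num at h
  · refine ⟨(1, 1 / 3), by norm_num [curveC], fun x _ ⟨hp₁, hp₂⟩ => ?_⟩
    have hx : ‖x‖ = 1 := by
      by_contra hx
      have h := congrArg norm hp₁
      rw [norm_mul_zpow_of_norm_eq_one h₁.norm_eq_one, norm_one, eq_comm,
        zpow_eq_one_iff_right₀ (norm_nonneg x) hx] at h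
      exact ha h
    have h := congrArg norm hp₂
    rw [norm_mul_zpow_of_norm_eq_one h₂.norm_eq_one, hx, one_zpow] at h
    norm_num at h

/-- for every `(a, b) ≠ (0, 0)` and all roots of unity `ζ₁, ζ₂`, the curve
`C` is not contained in the torsion translate `{(ζ₁·x^a, ζ₂·x^b) : x ∈ ℂ^×}`. -/
theorem curveC_not_subset_torsion_translate (a b : ℤ) (hab : ¬(a = 0 ∧ b = 0))
    (ζ₁ ζ₂ : ℂ) (h₁ : IsRootOfUnity ζ₁) (h₂ : IsRootOfUnity ζ₂) :
    ∃ p ∈ curveC, ∀ x : ℂ, x ≠ 0 → ¬(p.1 = ζ₁ * x ^ a ∧ p.2 = ζ₂ * x ^ b) :=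
  curveC_not_subset_torsion_translate_general a b ζ₁ ζ₂ h₁ h₂
end

section
/- Let a, b ∈ ℤ be coprime with b ≠ 2a. Then the set of points (x₁, x₂) ∈ C for which there exist roots of unity ζ₁, ζ₂ and x ∈ ℂ^× with x₁ = ζ₁·x^a and x₂ = ζ₂·x^b is infinite. (Explicitly, for all integers q > p ≥ 2 the pairwise distinct points (e^{2πip/q}·3^{a/(2a−b)}, e^{4πip/q}·3^{b/(2a−b)}) belong to this set.) -/
/-- The set of points of `C` lying on the torsion translate of the subtorus
`{(x^a, x^b)}` by some pair of roots of unity. -/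
def torsionLocus (a b : ℤ) : Set (ℂ × ℂ) :=
  {p ∈ curveC | ∃ ζ₁ ζ₂ x : ℂ, IsRootOfUnity ζ₁ ∧ IsRootOfUnity ζ₂ ∧ x ≠ 0 ∧
    p.1 = ζ₁ * x ^ a ∧ p.2 = ζ₂ * x ^ b}

/-!
Pick `x ≠ 0` with `x ^ (2a - b) = 3`. For every root of unity `ζ` the point
`(ζ x^a, ζ² x^b)` lies on `C`, since `(ζ x^a)² = ζ² x^b · x^(2a-b) = 3 ζ² x^b`, and these
points are pairwise distinct because their first coordinates are. There are infinitely many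
roots of unity, e.g. the `exp (2πi/n)`.
-/

namespace IsRootOfUnity

theorem ne_zero {ζ : ℂ} (hζ : IsRootOfUnity ζ) : ζ ≠ 0 := by
  obtain ⟨n, hn, hζn⟩ := hζ
  rintro rfl
  simp [zero_pow hn.ne'] at hζn

theorem pow {ζ : ℂ} (hζ : IsRootOfUnity ζ) (k : ℕ) : IsRootOfUnity (ζ ^ k) := by
  obtain ⟨n, hn, hζn⟩ := hζ
  exact ⟨n, hn, by rw [← pow_mul, mul_comm, pow_mul, hζn, one_pow]⟩

end IsRootOfUnity

theorem IsPrimitiveRoot.isRootOfUnity {ζ : ℂ} {n : ℕ} (hζ : IsPrimitiveRoot ζ n) (hn : 0 < n) :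
    IsRootOfUnity ζ :=
  ⟨n, hn, hζ.pow_eq_one⟩

theorem setOf_isRootOfUnity_infinite : {ζ : ℂ | IsRootOfUnity ζ}.Infinite := by
  have hprim (n : ℕ) :
      IsPrimitiveRoot (Complex.exp (2 * Real.pi * Complex.I / (n + 1 : ℕ))) (n + 1) :=
    Complex.isPrimitiveRoot_exp (n + 1) n.succ_ne_zero
  refine Set.infinite_of_injective_forall_mem (fun m n hmn => ?_)
    fun n => (hprim n).isRootOfUnity n.succ_pos
  exact Nat.succ_injective ((hprim m).unique (hmn ▸ hprim n))

theorem exists_zpow_eq_of_ne_zero {K : Type*} [Field K] [IsAlgClosed K] {c : K} (hc : c ≠ 0)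
    {d : ℤ} (hd : d ≠ 0) : ∃ x : K, x ≠ 0 ∧ x ^ d = c := by
  obtain ⟨y, hy⟩ := IsAlgClosed.exists_pow_nat_eq c (Int.natAbs_pos.mpr hd)
  have hy0 : y ≠ 0 := by
    rintro rfl
    exact hc (hy ▸ zero_pow (Int.natAbs_ne_zero.mpr hd))
  rcases Int.natAbs_eq d with hd' | hd'
  · exact ⟨y, hy0, by rw [hd', zpow_natCast, hy]⟩
  · exact ⟨y⁻¹, inv_ne_zero hy0, by rw [hd', inv_zpow', neg_neg, zpow_natCast, hy]⟩

theorem mem_torsionLocus {a b : ℤ} {x ζ : ℂ} (hx : x ≠ 0) (hxd : x ^ (2 * a - b) = 3)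
    (hζ : IsRootOfUnity ζ) : (ζ * x ^ a, ζ ^ 2 * x ^ b) ∈ torsionLocus a b := by
  have hsq : (x ^ a) ^ 2 = x ^ b * x ^ (2 * a - b) := by
    rw [← zpow_add₀ hx, ← zpow_natCast, ← zpow_mul]
    ring_nf
  refine ⟨⟨mul_ne_zero hζ.ne_zero (zpow_ne_zero a hx),
      mul_ne_zero (pow_ne_zero 2 hζ.ne_zero) (zpow_ne_zero b hx), ?_⟩,
    ζ, ζ ^ 2, x, hζ, hζ.pow 2, hx, rfl, rfl⟩
  rw [mul_pow, hsq, hxd]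
  ring

theorem torsionLocus_infinite_general (a b : ℤ) (h : b ≠ 2 * a) :
    (torsionLocus a b).Infinite := by
  obtain ⟨x, hx, hxd⟩ := exists_zpow_eq_of_ne_zero (three_ne_zero (α := ℂ))
    (show 2 * a - b ≠ 0 by omega)
  refine Set.infinite_of_injOn_mapsTo (f := fun ζ => (ζ * x ^ a, ζ ^ 2 * x ^ b))
    (fun ζ _ ξ _ hζξ => mul_right_cancel₀ (zpow_ne_zero a hx) (congrArg Prod.fst hζξ))
    (fun ζ hζ => mem_torsionLocus hx hxd hζ) setOf_isRootOfUnity_infinite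

/-- for `a, b` coprime with `b ≠ 2a`, the set of points of `C` lying on
a torsion translate of the subtorus `{(x^a, x^b)}` is infinite. -/
theorem torsionLocus_infinite (a b : ℤ) (hco : IsCoprime a b) (h : b ≠ 2 * a) :
    (torsionLocus a b).Infinite :=
  torsionLocus_infinite_general a b h
end

section
/- The set of points (x₁, x₂) ∈ C for which there exist integers a, b with b ≠ 2a, roots of unity ζ₁, ζ₂ and x ∈ ℂ^× with x₁ = ζ₁·x^a and x₂ = ζ₂·x^b is dense in C for the topology induced from ℂ × ℂ. -/
/-- The full transverse Hodge locus of the curve `C`: points of `C` lying on a torsion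
translate of some one-parameter subtorus `{(x^a, x^b)}` with `b ≠ 2a`. -/
def fullTorsionLocus : Set (ℂ × ℂ) :=
  {p ∈ curveC | ∃ a b : ℤ, b ≠ 2 * a ∧ ∃ ζ₁ ζ₂ x : ℂ,
    IsRootOfUnity ζ₁ ∧ IsRootOfUnity ζ₂ ∧ x ≠ 0 ∧
    p.1 = ζ₁ * x ^ a ∧ p.2 = ζ₂ * x ^ b}

open Complex
open scoped Real

lemma IsRootOfUnity.pow_s12 {ζ : ℂ} (hζ : IsRootOfUnity ζ) (k : ℕ) : IsRootOfUnity (ζ ^ k) := by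
  obtain ⟨n, hn, hζn⟩ := hζ
  exact ⟨n, hn, by rw [← pow_mul, mul_comm, pow_mul, hζn, one_pow]⟩

lemma isRootOfUnity_exp_rat_mul_two_pi_I (q : ℚ) : IsRootOfUnity (exp (q * (2 * π * I))) := by
  refine ⟨q.den, q.pos, ?_⟩
  have hden : (q.den : ℂ) * (q * (2 * π * I)) = q.num * (2 * π * I) := by
    rw [Rat.cast_def]
    field_simp
  rw [← Complex.exp_nat_mul, hden, exp_int_mul_two_pi_mul_I]

lemma mk_mem_fullTorsionLocus {ζ r : ℂ} (hζ : IsRootOfUnity ζ) (hr : r ≠ 0) {n : ℤ} (hn : n ≠ 0)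
    (hr3 : r ^ n = 3) (m : ℤ) : (ζ * r ^ m, (ζ * r ^ m) ^ 2 / 3) ∈ fullTorsionLocus := by
  have hζ0 : ζ ≠ 0 := by
    obtain ⟨k, hk, hζk⟩ := hζ
    exact fun h ↦ by simp [h, hk.ne'] at hζk
  have hx : ζ * r ^ m ≠ 0 := mul_ne_zero hζ0 (zpow_ne_zero m hr)
  refine ⟨⟨hx, by simpa using hx, by ring⟩, m, 2 * m - n, by omega, ζ, ζ ^ 2, r,
    hζ, hζ.pow_s12 2, hr, rfl, ?_⟩
  show (ζ * r ^ m) ^ 2 / 3 = ζ ^ 2 * r ^ (2 * m - n)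
  rw [zpow_sub₀ hr, hr3, mul_comm 2 m, zpow_mul, zpow_ofNat]
  ring

noncomputable def curvePoint (st : ℝ × ℝ) : ℂ × ℂ :=
  let z := exp (st.1 * Real.log 3 + st.2 * (2 * π * I))
  (z, z ^ 2 / 3)

lemma continuous_curvePoint : Continuous curvePoint := by
  unfold curvePoint
  fun_prop

lemma curvePoint_rat_mem_fullTorsionLocus (q₁ q₂ : ℚ) :
    curvePoint (q₁, q₂) ∈ fullTorsionLocus := by
  set r := Complex.exp (Real.log 3 / q₁.den)
  have hr3 : r ^ (q₁.den : ℤ) = 3 := by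
    rw [← exp_int_mul, Int.cast_natCast, mul_div_cancel₀ _ (by exact_mod_cast q₁.den_nz),
      ← ofReal_exp, Real.exp_log three_pos]
    norm_num
  have hz : exp ((q₁ : ℝ) * Real.log 3 + (q₂ : ℝ) * (2 * π * I))
      = exp (q₂ * (2 * π * I)) * r ^ q₁.num := by
    rw [← exp_int_mul, ← Complex.exp_add, add_comm, Rat.cast_def q₁]
    push_cast
    ring_nf
  simpa only [curvePoint, hz] using mk_mem_fullTorsionLocus
    (isRootOfUnity_exp_rat_mul_two_pi_I q₂) (exp_ne_zero _) (by exact_mod_cast q₁.den_nz) hr3 q₁.num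

lemma curveC_subset_range_curvePoint : curveC ⊆ Set.range curvePoint := by
  rintro p ⟨hp₁, -, hp⟩
  refine ⟨(Real.log ‖p.1‖ / Real.log 3, arg p.1 / (2 * π)), ?_⟩
  have hlog3 : (Real.log 3 : ℂ) ≠ 0 := ofReal_ne_zero.mpr (by positivity)
  have hz : exp ((Real.log ‖p.1‖ / Real.log 3 : ℝ) * Real.log 3
      + (arg p.1 / (2 * π) : ℝ) * (2 * π * I)) = p.1 := by
    refine (congrArg Complex.exp ?_).trans (exp_log hp₁)
    rw [Complex.log]
    push_cast
    field_simp
  simp only [curvePoint, hz]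
  ext <;> simp [hp]

/-- the full transverse Hodge locus of `C` is dense in `C` for the
topology induced from `ℂ × ℂ`. -/
theorem fullTorsionLocus_dense : curveC ⊆ closure fullTorsionLocus := by
  rintro _ hp
  obtain ⟨st, rfl⟩ := curveC_subset_range_curvePoint hp
  have hdense : DenseRange fun q : ℚ × ℚ ↦ ((q.1 : ℝ), (q.2 : ℝ)) :=
    Rat.denseRange_cast.prodMap Rat.denseRange_cast
  refine map_mem_closure continuous_curvePoint (hdense st) ?_
  rintro _ ⟨q, rfl⟩
  exact curvePoint_rat_mem_fullTorsionLocus q.1 q.2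
end
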